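/- arXiv:math/9812168 — 2 statements merged into one kernel-verified Lean document; each statement's English description precedes it below -/
import Mathlib

section
/- Let G be a finite group with a normal subgroup V such that V is an elementary abelian 2-group, the quotient G/V is an elementary abelian 2-group, and V is of maximal rank in G. Let C_G(V) denote the centralizer of V in G (so V ≤ C_G(V)). Then rank(C_G(V)/V) ≤ 2·rank(V ∩ Z(G)). -/
/-- A subgroup is an elementary abelian 2-group: every element squares to the
identity (such a subgroup is automatically abelian). -/
def IsElemAbelian2 {G : Type*} [Group G] (A : Subgroup G) : Prop :=
  (∀ a ∈ A, a * a = 1) ∧ ∀ a ∈ A, ∀ b ∈ A, a * b = b * a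

/-- A subgroup `V` of `G` has maximal rank if every elementary abelian
2-subgroup `A` of `G` satisfies `|A| ≤ |V|`. -/
def IsMaximalRank2 {G : Type*} [Group G] (V : Subgroup G) : Prop :=
  ∀ A : Subgroup G, IsElemAbelian2 A → Nat.card A ≤ Nat.card V

/-!
Squaring `c ↦ c²` induces a map `q : C_G(V)/V → V ∩ Z(G)`: a square in `C_G(V)` is central because
conjugation changes `c` only by an involution of `V` commuting with it. Since
`(cd)² = ⁅c, d⁆ c² d²` with `⁅c, d⁆` central and biadditive, `q` is a quadratic map between
`𝔽₂`-vector spaces. It is anisotropic: if `c² = 1` and `c ∉ V`, then `⟨V, c⟩` would be an elementary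
abelian 2-group larger than `V`. Over a finite field, an anisotropic quadratic map `K^r → K^n`
forces `r ≤ 2n` by Chevalley–Warning: its `n` coordinates are forms of degree 2 in `r` variables
whose only common zero is `0`.
-/

open MvPolynomial Subgroup
open scoped commutatorElement

theorem QuadraticMap.exists_isHomogeneous_eval_eq {R ι : Type*} [CommRing R] [Fintype ι]
    (Q : QuadraticForm R (ι → R)) :
    ∃ P : MvPolynomial ι R, P.IsHomogeneous 2 ∧ ∀ x, eval x P = Q x := by
  classical
  obtain ⟨B, rfl⟩ := LinearMap.BilinMap.toQuadraticMap_surjective Q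
  refine ⟨∑ i, X i * (LinearMap.toMatrix₂' R B).toMvPolynomial i,
    IsHomogeneous.sum _ _ _ fun i _ => (isHomogeneous_X R i).mul
      (Matrix.toMvPolynomial_isHomogeneous _ i), fun x => ?_⟩
  calc eval x _ = x ⬝ᵥ (LinearMap.toMatrix₂' R B).mulVec x := by
        simp [Matrix.toMvPolynomial_eval_eq_apply, dotProduct]
    _ = B.toQuadraticMap x := by
        rw [LinearMap.BilinMap.toQuadraticMap_apply, ← Matrix.toLinearMap₂'_apply',
          Matrix.toLinearMap₂'_toMatrix']

theorem QuadraticMap.Anisotropic.finrank_le_two_mul {K M N : Type*} [Field K] [Fintype K]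
    [AddCommGroup M] [Module K M] [Module.Finite K M] [AddCommGroup N] [Module K N]
    [Module.Finite K N] {Q : QuadraticMap K M N} (hQ : Q.Anisotropic) :
    Module.finrank K M ≤ 2 * Module.finrank K N := by
  classical
  by_contra! hlt
  let bM := Module.finBasis K M
  let bN := Module.finBasis K N
  choose P hhom heval using fun t => ((bN.coord t).compQuadraticMap
    (Q.comp bM.equivFun.symm.toLinearMap)).exists_isHomogeneous_eval_eq
  have hzero : ∀ x, (∀ t, eval x (P t) = 0) ↔ x = 0 := fun x => by
    simp only [heval, LinearMap.compQuadraticMap_apply, QuadraticMap.comp_apply,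
      bN.forall_coord_eq_zero_iff]
    exact ⟨fun h => bM.equivFun.symm.map_eq_zero_iff.1 (hQ _ h), fun h => by simp [h]⟩
  have hdvd := char_dvd_card_solutions_of_fintype_sum_lt (ringChar K) (f := P) <|
    calc ∑ t, (P t).totalDegree ≤ ∑ _t : Fin (Module.finrank K N), 2 :=
          Finset.sum_le_sum fun t _ => (hhom t).totalDegree_le
      _ < Fintype.card (Fin (Module.finrank K M)) := by simpa [mul_comm] using hlt
  rw [Fintype.card_eq_nat_card, Nat.card_congr (Equiv.subtypeEquivRight hzero), Nat.card_unique,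
    Nat.dvd_one] at hdvd
  exact CharP.ringChar_ne_one hdvd

theorem mul_comm_of_mul_self_eq_one {H : Type*} [Group H] (hH : ∀ a : H, a * a = 1) (a b : H) :
    a * b = b * a :=
  Commute.of_orderOf_dvd_two (fun a => orderOf_dvd_of_pow_eq_one ((pow_two a).trans (hH a))) a b

open scoped IsMulCommutative in
theorem natCard_le_sq_of_anisotropic {H Z : Type*} [Group H] [Group Z] [Finite H] [Finite Z]
    (hH : ∀ h : H, h * h = 1) (hZ : ∀ z : Z, z * z = 1) (q : H → Z) (b : H → H → Z)
    (hq : ∀ h k, q (h * k) = b h k * q h * q k)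
    (hbl : ∀ h h' k, b (h * h') k = b h k * b h' k)
    (hbr : ∀ h k k', b h (k * k') = b h k * b h k')
    (haniso : ∀ h, q h = 1 → h = 1) :
    Nat.card H ≤ Nat.card Z ^ 2 := by
  have : IsMulCommutative H := ⟨⟨mul_comm_of_mul_self_eq_one hH⟩⟩
  have : IsMulCommutative Z := ⟨⟨mul_comm_of_mul_self_eq_one hZ⟩⟩
  let _ := AddCommGroup.zmodModule (n := 2) fun x : Additive H => (two_nsmul x).trans (hH x.toMul)
  let _ := AddCommGroup.zmodModule (n := 2) fun x : Additive Z => (two_nsmul x).trans (hZ x.toMul)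
  have hq_one : q 1 = 1 := by
    have hb : b 1 1 = 1 := by simpa using hbl 1 1 1
    simpa [hb] using hq 1 1
  let Q : QuadraticMap (ZMod 2) (Additive H) (Additive Z) :=
    { toFun x := .ofMul (q x.toMul)
      toFun_smul a x := by
        obtain rfl | rfl := (by decide : ∀ a : ZMod 2, a = 0 ∨ a = 1) a
        · simpa using congrArg Additive.ofMul hq_one
        · simp
      exists_companion' := ⟨LinearMap.mk₂ (ZMod 2) (fun x y => .ofMul (b x.toMul y.toMul))
        (fun _ _ _ => hbl ..)
        (fun a x y => ZMod.map_smul (AddMonoidHom.mk' (fun x : Additive H =>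
          Additive.ofMul (b x.toMul y.toMul)) fun _ _ => hbl ..) a x)
        (fun _ _ _ => hbr ..)
        (fun a x y => ZMod.map_smul (AddMonoidHom.mk' (fun y : Additive H =>
          Additive.ofMul (b x.toMul y.toMul)) fun _ _ => hbr ..) a y),
        fun x y => by
          change q (x.toMul * y.toMul) = q x.toMul * q y.toMul * b x.toMul y.toMul
          rw [hq, mul_rotate]⟩ }
  have hQ : Q.Anisotropic := fun x hx => haniso x.toMul hx
  have : Module.Finite (ZMod 2) (Additive H) := Module.Finite.of_finite
  have : Module.Finite (ZMod 2) (Additive Z) := Module.Finite.of_finite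
  have hcardH : Nat.card H = 2 ^ Module.finrank (ZMod 2) (Additive H) :=
    (Module.natCard_eq_pow_finrank (V := Additive H)).trans (by rw [Nat.card_zmod])
  have hcardZ : Nat.card Z = 2 ^ Module.finrank (ZMod 2) (Additive Z) :=
    (Module.natCard_eq_pow_finrank (V := Additive Z)).trans (by rw [Nat.card_zmod])
  rw [hcardH, hcardZ, ← pow_mul, mul_comm]
  exact Nat.pow_le_pow_right two_pos hQ.finrank_le_two_mul

theorem natCard_quotient_le_sq {C Z : Type*} [Group C] [Group Z] [Finite C] [Finite Z]
    {N : Subgroup C} [N.Normal] (hC : ∀ c : C, c * c ∈ N) (hZ : ∀ z : Z, z * z = 1)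
    (q : C → Z) (b : C → C → Z) (hq : ∀ c d, q (c * d) = b c d * q c * q d)
    (hbl : ∀ c c' d, b (c * c') d = b c d * b c' d)
    (hbr : ∀ c d d', b c (d * d') = b c d * b c d')
    (hb_left : ∀ n ∈ N, ∀ c, b n c = 1) (hb_right : ∀ c, ∀ n ∈ N, b c n = 1)
    (hqN : ∀ c, q c = 1 ↔ c ∈ N) :
    Nat.card (C ⧸ N) ≤ Nat.card Z ^ 2 := by
  have hq_mul : ∀ c, ∀ n ∈ N, q (c * n) = q c := fun c n hn => by
    rw [hq, hb_right c n hn, (hqN n).2 hn, one_mul, mul_one]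
  have hb_mul : ∀ c d, ∀ n ∈ N, ∀ m ∈ N, b (c * n) (d * m) = b c d := fun c d n hn m hm => by
    rw [hbl, hb_left n hn, mul_one, hbr, hb_right c m hm, mul_one]
  let q' (x : C ⧸ N) : Z := x.liftOn' q fun c c' h => by
    rw [← mul_inv_cancel_left c c', hq_mul _ _ (QuotientGroup.leftRel_apply.1 h)]
  let b' (x y : C ⧸ N) : Z := x.liftOn₂' y b fun c d c' d' hc hd => by
    rw [← mul_inv_cancel_left c c', ← mul_inv_cancel_left d d',
      hb_mul _ _ _ (QuotientGroup.leftRel_apply.1 hc) _ (QuotientGroup.leftRel_apply.1 hd)]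
  refine natCard_le_sq_of_anisotropic (fun x => ?_) hZ q' b' (fun x y => ?_) (fun x x' y => ?_)
    (fun x y y' => ?_) (fun x hx => ?_)
  · induction x using QuotientGroup.induction_on with | H c => ?_
    exact (QuotientGroup.eq_one_iff _).2 (hC c)
  · induction x using QuotientGroup.induction_on with | H c => ?_
    induction y using QuotientGroup.induction_on with | H d => ?_
    exact hq c d
  · induction x using QuotientGroup.induction_on with | H c => ?_
    induction x' using QuotientGroup.induction_on with | H c' => ?_
    induction y using QuotientGroup.induction_on with | H d => ?_
    exact hbl c c' d
  · induction x using QuotientGroup.induction_on with | H c => ?_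
    induction y using QuotientGroup.induction_on with | H d => ?_
    induction y' using QuotientGroup.induction_on with | H d' => ?_
    exact hbr c d d'
  · induction x using QuotientGroup.induction_on with | H c => ?_
    exact (QuotientGroup.eq_one_iff _).2 ((hqN c).1 hx)

section SquaresCentral

variable {G : Type*} [Group G] {c d : G}

theorem mul_self_mul_eq_of_mem_center (hc : c * c ∈ center G) :
    c * d * (c * d) = ⁅c, d⁆ * (c * c) * (d * d) :=
  calc c * d * (c * d) = ⁅c, d⁆ * (d * (c * c)) * d := by rw [commutatorElement_def]; group
    _ = ⁅c, d⁆ * (c * c) * (d * d) := by rw [mem_center_iff.1 hc d]; group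

theorem commutatorElement_mem_center (hc : c * c ∈ center G) (hd : d * d ∈ center G)
    (hcd : c * d * (c * d) ∈ center G) : ⁅c, d⁆ ∈ center G := by
  have h : ⁅c, d⁆ = c * d * (c * d) * (d * d)⁻¹ * (c * c)⁻¹ := by
    rw [mul_self_mul_eq_of_mem_center hc]; group
  rw [h]
  exact mul_mem (mul_mem hcd (inv_mem hd)) (inv_mem hc)

theorem commutatorElement_mul_left_of_mem_center {c' : G} (h : ⁅c', d⁆ ∈ center G) :
    ⁅c * c', d⁆ = ⁅c, d⁆ * ⁅c', d⁆ := by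
  rw [commutatorElement_mul_left_eq_conj_mul, mem_center_iff.1 h c, mul_inv_cancel_right]
  exact (mem_center_iff.1 h _).symm

theorem commutatorElement_mul_right_of_mem_center {d' : G} (h : ⁅c, d'⁆ ∈ center G) :
    ⁅c, d * d'⁆ = ⁅c, d⁆ * ⁅c, d'⁆ := by
  rw [commutatorElement_mul_right_eq_mul_conj, mul_assoc ⁅c, d⁆, mem_center_iff.1 h d,
    ← mul_assoc, mul_inv_cancel_right]

end SquaresCentral

theorem isElemAbelian2_closure {G : Type*} [Group G] {S : Set G} (hsq : ∀ a ∈ S, a * a = 1)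
    (hcomm : ∀ a ∈ S, ∀ b ∈ S, a * b = b * a) : IsElemAbelian2 (closure S) := by
  have hcomm' : ∀ a ∈ closure S, ∀ b ∈ closure S, a * b = b * a := fun a ha b hb =>
    congrArg Subtype.val ((isMulCommutative_closure hcomm).is_comm.comm ⟨a, ha⟩ ⟨b, hb⟩)
  refine ⟨fun a ha => ?_, hcomm'⟩
  induction ha using closure_induction with
  | mem a ha => exact hsq a ha
  | one => exact mul_one 1
  | mul a b ha hb iha ihb =>
    calc a * b * (a * b) = a * (b * a) * b := by group
      _ = a * a * (b * b) := by rw [← hcomm' a ha b hb]; group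
      _ = 1 := by rw [iha, ihb, mul_one]
  | inv a _ ih => rw [← mul_inv_rev, ih, inv_one]

section Centralizer

variable {G : Type*} [Group G] {V : Subgroup G}

theorem mem_of_mem_centralizer_of_mul_self_eq_one [Finite G] (hV : IsElemAbelian2 V)
    (hmax : IsMaximalRank2 V) {c : G} (hc : c ∈ centralizer (V : Set G)) (hcc : c * c = 1) :
    c ∈ V := by
  have hcV : ∀ v ∈ V, v * c = c * v := mem_centralizer_iff.1 hc
  have hK : IsElemAbelian2 (closure (insert c (V : Set G))) := by
    refine isElemAbelian2_closure ?_ ?_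
    · rintro a (rfl | ha)
      exacts [hcc, hV.1 a ha]
    · rintro a (rfl | ha) b (rfl | hb)
      exacts [rfl, (hcV b hb).symm, hcV a ha, hV.2 a ha b hb]
  have hVK : V ≤ closure (insert c (V : Set G)) := fun v hv => subset_closure (Or.inr hv)
  rw [eq_of_le_of_card_ge hVK (hmax _ hK)]
  exact subset_closure (Set.mem_insert c _)

variable [V.Normal] (hW : ∀ w : G ⧸ V, w * w = 1)
include hW

theorem mul_self_mem_of_quotient (g : G) : g * g ∈ V :=
  (QuotientGroup.eq_one_iff _).1 (hW g)

theorem commutatorElement_mem_of_quotient (g h : G) : ⁅g, h⁆ ∈ V := by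
  rw [← QuotientGroup.eq_one_iff, ← QuotientGroup.mk'_apply, map_commutatorElement,
    commutatorElement_eq_one_iff_mul_comm]
  exact mul_comm_of_mul_self_eq_one hW _ _

theorem mul_self_mem_center_of_mem_centralizer (hV : ∀ v ∈ V, v * v = 1) {c : G}
    (hc : c ∈ centralizer (V : Set G)) : c * c ∈ center G := by
  refine mem_center_iff.2 fun g => ?_
  set v := ⁅g, c⁆
  have hv : v ∈ V := commutatorElement_mem_of_quotient hW g c
  have hconj : g * c * g⁻¹ = v * c := by simp [v, commutatorElement_def]
  calc g * (c * c) = (g * c * g⁻¹) * (g * c * g⁻¹) * g := by group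
    _ = v * (c * v) * c * g := by rw [hconj]; group
    _ = c * c * g := by rw [← mem_centralizer_iff.1 hc v hv, ← mul_assoc, hV v hv, one_mul]

end Centralizer

theorem stmt3 (G : Type*) [Group G] [Finite G] (V : Subgroup G) [V.Normal]
    (hV : IsElemAbelian2 V) (hmax : IsMaximalRank2 V)
    (hW : ∀ w : G ⧸ V, w * w = 1)
    (nZ rC : ℕ)
    (hnZ : Nat.card (V ⊓ Subgroup.center G : Subgroup G) = 2 ^ nZ)
    -- rank of C_G(V)/V
    (hrC : Nat.card
        (Subgroup.centralizer (V : Set G) ⧸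
          V.subgroupOf (Subgroup.centralizer (V : Set G))) = 2 ^ rC) :
    rC ≤ 2 * nZ := by
  set C := centralizer (V : Set G)
  have hsq (c : C) : (c : G) * c ∈ V ⊓ center G :=
    ⟨mul_self_mem_of_quotient hW c, mul_self_mem_center_of_mem_centralizer hW hV.1 c.2⟩
  have hcomm (c d : C) : ⁅(c : G), (d : G)⁆ ∈ V ⊓ center G :=
    ⟨commutatorElement_mem_of_quotient hW c d, commutatorElement_mem_center (hsq c).2 (hsq d).2
      (hsq (c * d)).2⟩
  have key := natCard_quotient_le_sq (N := V.subgroupOf C)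
    (fun c => mul_self_mem_of_quotient hW c) (fun z => Subtype.ext (hV.1 z (mem_inf.1 z.2).1))
    (fun c => ⟨(c : G) * c, hsq c⟩) (fun c d => ⟨⁅(c : G), (d : G)⁆, hcomm c d⟩)
    (fun c d => Subtype.ext (mul_self_mul_eq_of_mem_center (hsq c).2))
    (fun c c' d => Subtype.ext (commutatorElement_mul_left_of_mem_center (hcomm c' d).2))
    (fun c d d' => Subtype.ext (commutatorElement_mul_right_of_mem_center (hcomm c d').2))
    (fun n hn c => Subtype.ext (commutatorElement_eq_one_iff_mul_comm.2
      (mem_centralizer_iff.1 c.2 n hn)))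
    (fun c n hn => Subtype.ext (commutatorElement_eq_one_iff_mul_comm.2
      (mem_centralizer_iff.1 c.2 n hn).symm))
    (fun c => ⟨fun h => mem_of_mem_centralizer_of_mul_self_eq_one hV hmax c.2
      (congrArg Subtype.val h), fun h => Subtype.ext (hV.1 c h)⟩)
  rw [hrC, hnZ, ← pow_mul, mul_comm] at key
  exact (Nat.pow_le_pow_iff_right one_lt_two).1 key
end

section
/- Let m ≡ 3 mod 4 and n ≥ 1. Then there exists a free continuous action of the group (ℤ/2ℤ)^{2n} on the product (ℝP^m)^n. (It is induced coordinatewise by the free action of the quaternion group Q₈ on S^m given by quaternionic coordinates, which descends to a free action of Q₈/{±1} ≅ (ℤ/2ℤ)² on ℝP^m.) -/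
noncomputable section

/-- The unit sphere `S^m` in `ℝ^{m+1}`. -/
abbrev Sph (m : ℕ) : Type := Metric.sphere (0 : EuclideanSpace ℝ (Fin (m + 1))) 1

/-- The antipodal relation on the sphere `S^m`. -/
def antipodal (m : ℕ) (x y : Sph m) : Prop :=
  (y : EuclideanSpace ℝ (Fin (m + 1))) = (x : EuclideanSpace ℝ (Fin (m + 1))) ∨
    (y : EuclideanSpace ℝ (Fin (m + 1))) = -(x : EuclideanSpace ℝ (Fin (m + 1)))

/-- Real projective `m`-space: the quotient of `S^m` by the antipodal map,
with the quotient topology. -/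
abbrev RP (m : ℕ) : Type := Quot (antipodal m)

open Metric Quaternion

/-!
Write `ℝ^{m+1} = ℍ^q` (possible as `m + 1 = 4q`). Left multiplication by a unit quaternion
preserves the unit sphere and commutes with `x ↦ -x`, so it descends to `ℝP^m`. For the
representatives `i^a j^b` of `Q₈/{±1} ≅ (ℤ/2)²` we have `i^a j^b · i^c j^d = ± i^{a+c} j^{b+d}`,
which makes this an action of `(ℤ/2)²` on `ℝP^m`. It is free: `u • x = ±x` with `x ≠ 0` forces
`u = ±1`, because `‖(u ∓ 1) • x‖ = ‖u ∓ 1‖ ‖x‖`, and `i^a j^b = ±1` only for `a = b = 0`.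
Acting coordinatewise then gives a free action of `(ℤ/2)^{2n}` on `(ℝP^m)^n`.
-/

structure IsFreeContinuousAddAction (A X : Type*) [AddGroup A] [TopologicalSpace X]
    (ρ : A → X → X) : Prop where
  zero_act : ∀ x, ρ 0 x = x
  add_act : ∀ g h x, ρ (g + h) x = ρ g (ρ h x)
  continuous_act : ∀ g, Continuous (ρ g)
  eq_zero_of_act_eq : ∀ g x, ρ g x = x → g = 0

namespace IsFreeContinuousAddAction

variable {A B X : Type*} [AddGroup A] [AddGroup B] [TopologicalSpace X] {ρ : A → X → X}

theorem pi (hρ : IsFreeContinuousAddAction A X ρ) (ι : Type*) :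
    IsFreeContinuousAddAction (ι → A) (ι → X) fun g x i => ρ (g i) (x i) where
  zero_act x := funext fun i => hρ.zero_act (x i)
  add_act g h x := funext fun i => hρ.add_act (g i) (h i) (x i)
  continuous_act g := continuous_pi fun i => (hρ.continuous_act (g i)).comp (continuous_apply i)
  eq_zero_of_act_eq g x h := funext fun i => hρ.eq_zero_of_act_eq (g i) (x i) (congrFun h i)

theorem comp_injective (hρ : IsFreeContinuousAddAction A X ρ) (φ : B →+ A)
    (hφ : Function.Injective φ) : IsFreeContinuousAddAction B X fun b => ρ (φ b) where
  zero_act x := by simpa using hρ.zero_act x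
  add_act g h x := by simpa using hρ.add_act (φ g) (φ h) x
  continuous_act g := hρ.continuous_act (φ g)
  eq_zero_of_act_eq g x h := hφ <| by simpa using hρ.eq_zero_of_act_eq (φ g) x h

end IsFreeContinuousAddAction

theorem antipodal_equivalence (m : ℕ) : Equivalence (antipodal m) where
  refl _ := Or.inl rfl
  symm := by rintro x y (h | h) <;> simp [antipodal, h]
  trans := by rintro x y z (h | h) (h' | h') <;> simp [antipodal, h, h']

theorem isFreeContinuousAddAction_quotMap {m : ℕ} {A : Type*} [AddGroup A]
    (T : A → Sph m → Sph m)
    (hT : ∀ g x y, antipodal m x y → antipodal m (T g x) (T g y))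
    (hzero : ∀ x, antipodal m (T 0 x) x)
    (hadd : ∀ g h x, antipodal m (T (g + h) x) (T g (T h x)))
    (hcont : ∀ g, Continuous (T g))
    (hfree : ∀ g x, antipodal m (T g x) x → g = 0) :
    IsFreeContinuousAddAction A (RP m) fun g => Quot.map (T g) (hT g) where
  zero_act := Quot.ind fun x => Quot.sound (hzero x)
  add_act g h := Quot.ind fun x => Quot.sound (hadd g h x)
  continuous_act g := continuous_quot_lift _ (continuous_quot_mk.comp (hcont g))
  eq_zero_of_act_eq g := Quot.ind fun x h =>
    hfree g x ((antipodal_equivalence m).eqvGen_iff.mp (Quot.eqvGen_exact h))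

section QuaternionicMultiplication

variable {m : ℕ} {F : Type*} [NormedAddCommGroup F] [NormedSpace ℝ F] [Module ℍ F]
  [NormSMulClass ℍ F] (L : EuclideanSpace ℝ (Fin (m + 1)) ≃ₗᵢ[ℝ] F)

def sphereQuatMul (u : sphere (0 : ℍ) 1) (x : Sph m) : Sph m :=
  ⟨L.symm ((u : ℍ) • L x), by simp [norm_smul]⟩

theorem coe_sphereQuatMul (u : sphere (0 : ℍ) 1) (x : Sph m) :
    (sphereQuatMul L u x : EuclideanSpace ℝ (Fin (m + 1))) = L.symm ((u : ℍ) • L x) := rfl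

theorem sphereQuatMul_one (x : Sph m) : sphereQuatMul L 1 x = x :=
  Subtype.ext <| by simp [coe_sphereQuatMul]

theorem sphereQuatMul_mul (u v : sphere (0 : ℍ) 1) (x : Sph m) :
    sphereQuatMul L (u * v) x = sphereQuatMul L u (sphereQuatMul L v x) :=
  Subtype.ext <| by simp [coe_sphereQuatMul, mul_smul]

theorem coe_sphereQuatMul_neg (u : sphere (0 : ℍ) 1) (x : Sph m) :
    (sphereQuatMul L (-u) x : EuclideanSpace ℝ (Fin (m + 1))) = -sphereQuatMul L u x := by
  simp [coe_sphereQuatMul, neg_smul]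

theorem antipodal_sphereQuatMul (u : sphere (0 : ℍ) 1) {x y : Sph m} (h : antipodal m x y) :
    antipodal m (sphereQuatMul L u x) (sphereQuatMul L u y) := by
  rcases h with h | h <;> simp [antipodal, coe_sphereQuatMul, h]

theorem continuous_sphereQuatMul (u : sphere (0 : ℍ) 1) : Continuous (sphereQuatMul L u) :=
  Continuous.subtype_mk (by fun_prop) _

theorem eq_one_or_neg_one_of_antipodal_sphereQuatMul {u : sphere (0 : ℍ) 1} {x : Sph m}
    (h : antipodal m (sphereQuatMul L u x) x) : u = 1 ∨ u = -1 := by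
  have eq_one : ∀ v : ℍ, v • L x = L x → v = 1 := fun v hv => by
    have : ‖v - 1‖ * ‖L x‖ = 0 := by rw [← norm_smul, sub_smul, one_smul, hv, sub_self, norm_zero]
    simpa [sub_eq_zero] using this
  rcases h with h | h <;> apply_fun L at h <;> simp only [coe_sphereQuatMul, map_neg,
    LinearIsometryEquiv.apply_symm_apply] at h
  · exact Or.inl <| Subtype.ext <| eq_one _ h.symm
  · refine Or.inr <| Subtype.ext ?_
    rw [coe_neg_sphere, unitSphere.coe_one, ← neg_eq_iff_eq_neg]
    exact eq_one _ (by rw [neg_smul, ← h])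

end QuaternionicMultiplication

def quatI : ℍ := ⟨0, 1, 0, 0⟩

def quatJ : ℍ := ⟨0, 0, 1, 0⟩

theorem norm_eq_one_of_mul_self_eq_neg_one {R : Type*} [NormedRing R] [NormMulClass R]
    [NormOneClass R] {u : R} (h : u * u = -1) : ‖u‖ = 1 := by
  have : ‖u‖ * ‖u‖ = 1 := by rw [← norm_mul, h, norm_neg, norm_one]
  nlinarith [norm_nonneg u]

def q8Rep (g : ZMod 2 × ZMod 2) : sphere (0 : ℍ) 1 :=
  ⟨quatI ^ g.1.val * quatJ ^ g.2.val, by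
    have hI : ‖quatI‖ = 1 := norm_eq_one_of_mul_self_eq_neg_one <| by ext <;> simp <;> simp [quatI]
    have hJ : ‖quatJ‖ = 1 := norm_eq_one_of_mul_self_eq_neg_one <| by ext <;> simp <;> simp [quatJ]
    simp [hI, hJ]⟩

theorem zmod_two_eq_zero_or_one (a : ZMod 2) : a = 0 ∨ a = 1 := by decide +revert

theorem q8Rep_zero : q8Rep 0 = 1 := Subtype.ext <| by simp [q8Rep]

theorem q8Rep_add (g h : ZMod 2 × ZMod 2) :
    q8Rep (g + h) = q8Rep g * q8Rep h ∨ q8Rep (g + h) = -(q8Rep g * q8Rep h) := by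
  obtain ⟨a, b⟩ := g
  obtain ⟨c, d⟩ := h
  simp only [Subtype.ext_iff, coe_neg_sphere, unitSphere.coe_mul, q8Rep, Prod.mk_add_mk]
  rcases zmod_two_eq_zero_or_one a with rfl | rfl <;>
    rcases zmod_two_eq_zero_or_one b with rfl | rfl <;>
    rcases zmod_two_eq_zero_or_one c with rfl | rfl <;>
    rcases zmod_two_eq_zero_or_one d with rfl | rfl <;>
    simp [ZMod.val_add, ZMod.val_one_eq_one_mod, Quaternion.ext_iff] <;> simp [quatI, quatJ]

theorem eq_zero_of_q8Rep_eq_one_or_neg_one {g : ZMod 2 × ZMod 2}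
    (h : q8Rep g = 1 ∨ q8Rep g = -1) : g = 0 := by
  obtain ⟨a, b⟩ := g
  simp only [Subtype.ext_iff, coe_neg_sphere, unitSphere.coe_one, q8Rep] at h
  rcases zmod_two_eq_zero_or_one a with rfl | rfl <;>
    rcases zmod_two_eq_zero_or_one b with rfl | rfl <;>
    simp [ZMod.val_one_eq_one_mod, Quaternion.ext_iff] at h ⊢ <;> simp [quatI, quatJ] at h

def quaternionCoords {ι κ : Type*} [Fintype ι] [Fintype κ] (e : ι ≃ κ × Fin 4) :
    EuclideanSpace ℝ ι ≃ₗᵢ[ℝ] PiLp 2 (fun _ : κ => ℍ) :=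
  (LinearIsometryEquiv.piLpCongrLeft 2 ℝ ℝ (e.trans (Equiv.sigmaEquivProd κ (Fin 4)).symm)).trans
    ((LinearIsometryEquiv.piLpCurry ℝ 2 fun _ _ => ℝ).trans
      (LinearIsometryEquiv.piLpCongrRight 2 fun _ => Quaternion.linearIsometryEquivTuple.symm))

theorem RP.exists_isFreeContinuousAddAction {m : ℕ} (hm : m % 4 = 3) :
    ∃ ρ : ZMod 2 × ZMod 2 → RP m → RP m, IsFreeContinuousAddAction _ _ ρ := by
  let L := quaternionCoords <|
    (finCongr (by omega : m + 1 = (m / 4 + 1) * 4)).trans finProdFinEquiv.symm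
  refine ⟨_, isFreeContinuousAddAction_quotMap (fun g => sphereQuatMul L (q8Rep g))
    (fun g _ _ => antipodal_sphereQuatMul L (q8Rep g)) (fun x => ?_) (fun g h x => ?_)
    (fun g => continuous_sphereQuatMul L (q8Rep g)) (fun g x h => ?_)⟩
  · simp [q8Rep_zero, sphereQuatMul_one, antipodal]
  · rw [← sphereQuatMul_mul]
    rcases q8Rep_add g h with hgh | hgh <;> rw [hgh]
    · exact (antipodal_equivalence m).refl _
    · simp [antipodal, coe_sphereQuatMul_neg]
  · exact eq_zero_of_q8Rep_eq_one_or_neg_one (eq_one_or_neg_one_of_antipodal_sphereQuatMul L h)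

theorem stmt10_general (m n : ℕ) (hm : m % 4 = 3) :
    ∃ ρ : (Fin (2 * n) → ZMod 2) → (Fin n → RP m) → (Fin n → RP m),
      (∀ x, ρ 0 x = x) ∧
      (∀ g h x, ρ (g + h) x = ρ g (ρ h x)) ∧
      (∀ g, Continuous (ρ g)) ∧
      (∀ g x, ρ g x = x → g = 0) := by
  obtain ⟨ρ, hρ⟩ := RP.exists_isFreeContinuousAddAction hm
  let φ : (Fin (2 * n) → ZMod 2) ≃ₗ[ZMod 2] (Fin n → ZMod 2 × ZMod 2) :=
    (LinearEquiv.funCongrLeft (ZMod 2) (ZMod 2)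
        (finProdFinEquiv.trans (finCongr (Nat.mul_comm n 2)))).trans
      ((LinearEquiv.curry (ZMod 2) (ZMod 2) (Fin n) (Fin 2)).trans
        (LinearEquiv.piCongrRight fun _ => LinearEquiv.piFinTwo (ZMod 2) fun _ => ZMod 2))
  have h := (hρ.pi (Fin n)).comp_injective φ.toAddMonoidHom φ.injective
  exact ⟨_, h.zero_act, h.add_act, h.continuous_act, h.eq_zero_of_act_eq⟩

theorem stmt10 (m n : ℕ) (hm : m % 4 = 3) (hn : 1 ≤ n) :
    ∃ ρ : (Fin (2 * n) → ZMod 2) → (Fin n → RP m) → (Fin n → RP m),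
      (∀ x, ρ 0 x = x) ∧
      (∀ g h x, ρ (g + h) x = ρ g (ρ h x)) ∧
      (∀ g, Continuous (ρ g)) ∧
      (∀ g x, ρ g x = x → g = 0) :=
  stmt10_general m n hm
end
end
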